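/- arXiv:2211.16897 — 5 statements merged into one kernel-verified Lean document; each statement's English description precedes it below -/
import Mathlib

section
/- Discrete error bound (inequality (4.13) in the proof of Theorem 4.5). Under the hypotheses in the context, there exists a constant C > 0 depending only on Ca, Cb, α, β such that ‖Πu − u_h‖ + ‖Π^W p − p_h‖ ≤ C(‖Π̃u − u‖ + ‖Πu − u‖ + E_c + E_σ). -/
/-!
The velocity error `e = Πu − u_h` is discretely divergence free, and `(e, Π^W p − p_h)` solves
the discrete saddle-point problem with a residual bounded by the approximation, consistency and
quadrature errors. Babuška–Brezzi stability then bounds `e` by coercivity on the discrete kernel,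
and `Π^W p − p_h` by the inf-sup condition.
-/

theorem mul_le_of_mul_sq_le_mul {α x R : ℝ} (hx : 0 ≤ x) (hR : 0 ≤ R)
    (h : α * x ^ 2 ≤ R * x) : α * x ≤ R := by
  rcases hx.eq_or_lt with rfl | hx
  · simpa using hR
  · nlinarith

section SaddlePoint

variable {X W : Type*} [NormedAddCommGroup X] [NormedSpace ℝ X]
  [NormedAddCommGroup W] [NormedSpace ℝ W]
  {Vh : Submodule ℝ X} {Wh : Submodule ℝ W}
  {ah : X →ₗ[ℝ] X →ₗ[ℝ] ℝ} {b : X →ₗ[ℝ] W →ₗ[ℝ] ℝ} {e : X} {q : W} {R : ℝ}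

theorem mul_norm_le_of_coercive_on_kernel {α : ℝ}
    (hcoer : ∀ v ∈ Vh, (∀ w ∈ Wh, b v w = 0) → ah v v ≥ α * ‖v‖ ^ 2)
    (he : e ∈ Vh) (hq : q ∈ Wh) (hker : ∀ w ∈ Wh, b e w = 0) (hR : 0 ≤ R)
    (hres : ∀ v ∈ Vh, |ah e v - b v q| ≤ R * ‖v‖) :
    α * ‖e‖ ≤ R := by
  refine mul_le_of_mul_sq_le_mul (norm_nonneg e) hR ?_
  calc α * ‖e‖ ^ 2 ≤ ah e e := hcoer e he hker
    _ = ah e e - b e q := by rw [hker q hq, sub_zero]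
    _ ≤ R * ‖e‖ := le_of_abs_le (hres e he)

theorem mul_norm_le_of_inf_sup {Ca β : ℝ} (hAh : ∀ x y : X, |ah x y| ≤ Ca * ‖x‖ * ‖y‖)
    (hinfsup : ∀ w ∈ Wh, ∃ v ∈ Vh, v ≠ 0 ∧ b v w ≥ β * ‖v‖ * ‖w‖)
    (hq : q ∈ Wh) (hres : ∀ v ∈ Vh, |ah e v - b v q| ≤ R * ‖v‖) :
    β * ‖q‖ ≤ R + Ca * ‖e‖ := by
  obtain ⟨v, hv, hv0, hbv⟩ := hinfsup q hq
  refine le_of_mul_le_mul_right ?_ (norm_pos_iff.mpr hv0)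
  have hres_v := neg_le_of_abs_le (hres v hv)
  have hah_v := le_of_abs_le (hAh e v)
  nlinarith

theorem norm_add_norm_le_of_residual {Ca α β : ℝ} (hCa : 0 ≤ Ca) (hα : 0 < α) (hβ : 0 < β)
    (hAh : ∀ x y : X, |ah x y| ≤ Ca * ‖x‖ * ‖y‖)
    (hcoer : ∀ v ∈ Vh, (∀ w ∈ Wh, b v w = 0) → ah v v ≥ α * ‖v‖ ^ 2)
    (hinfsup : ∀ w ∈ Wh, ∃ v ∈ Vh, v ≠ 0 ∧ b v w ≥ β * ‖v‖ * ‖w‖)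
    (he : e ∈ Vh) (hq : q ∈ Wh) (hker : ∀ w ∈ Wh, b e w = 0) (hR : 0 ≤ R)
    (hres : ∀ v ∈ Vh, |ah e v - b v q| ≤ R * ‖v‖) :
    ‖e‖ + ‖q‖ ≤ (1 / α + (1 + Ca / α) / β) * R := by
  have he_le : ‖e‖ ≤ R / α := by
    rw [le_div_iff₀ hα, mul_comm]
    exact mul_norm_le_of_coercive_on_kernel hcoer he hq hker hR hres
  have hq_le : ‖q‖ ≤ (R + Ca * (R / α)) / β := by
    rw [le_div_iff₀ hβ, mul_comm]
    exact (mul_norm_le_of_inf_sup hAh hinfsup hq hres).trans (by gcongr)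
  calc ‖e‖ + ‖q‖ ≤ R / α + (R + Ca * (R / α)) / β := add_le_add he_le hq_le
    _ = (1 / α + (1 + Ca / α) / β) * R := by ring

end SaddlePoint

section ErrorEquations

variable {X W : Type*} [NormedAddCommGroup X] [NormedSpace ℝ X]
  [NormedAddCommGroup W] [NormedSpace ℝ W]
  {a ah : X →ₗ[ℝ] X →ₗ[ℝ] ℝ} {b : X →ₗ[ℝ] W →ₗ[ℝ] ℝ}

theorem error_mem_kernel {Wh : Submodule ℝ W} {F : W →ₗ[ℝ] ℝ} {u uh Pu : X}
    (hbu : ∀ w ∈ Wh, b u w = F w) (hbuh : ∀ w ∈ Wh, b uh w = F w)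
    (hPu : ∀ w ∈ Wh, b (u - Pu) w = 0) :
    ∀ w ∈ Wh, b (Pu - uh) w = 0 := by
  intro w hw
  have h := hPu w hw
  simp only [map_sub, LinearMap.sub_apply] at h ⊢
  linarith [hbu w hw, hbuh w hw]

theorem abs_error_residual_le {Ca Ec Eσ : ℝ} {u uh Pu Ptu v : X} {p ph PWp : W}
    (hA : ∀ x y : X, |a x y| ≤ Ca * ‖x‖ * ‖y‖) (hAh : ∀ x y : X, |ah x y| ≤ Ca * ‖x‖ * ‖y‖)
    (hdisc : ah uh v - b v ph = 0) (hPWp : b v (p - PWp) = 0)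
    (hcons : |a u v - b v p| ≤ Ec * ‖v‖) (hquad : |a Ptu v - ah Ptu v| ≤ Eσ * ‖v‖) :
    |ah (Pu - uh) v - b v (PWp - ph)| ≤
      (Ca * ‖Pu - Ptu‖ + Ca * ‖Ptu - u‖ + Eσ + Ec) * ‖v‖ := by
  have hsplit : ah (Pu - uh) v - b v (PWp - ph) = ah (Pu - Ptu) v - (a Ptu v - ah Ptu v)
      + a (Ptu - u) v + (a u v - b v p) + b v (p - PWp) - (ah uh v - b v ph) := by
    simp only [map_sub, LinearMap.sub_apply]
    ring
  rw [hsplit, hPWp, hdisc, abs_le]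
  have h₁ := abs_le.mp (hAh (Pu - Ptu) v)
  have h₂ := abs_le.mp hquad
  have h₃ := abs_le.mp (hA (Ptu - u) v)
  have h₄ := abs_le.mp hcons
  constructor <;> linarith [h₁.1, h₁.2, h₂.1, h₂.2, h₃.1, h₃.2, h₄.1, h₄.2]

end ErrorEquations

/-- Discrete error bound, inequality (4.13) in the paper
(proof of Theorem 4.5): there is a constant `C > 0`, depending only
on the continuity, coercivity and inf-sup constants `Ca, Cb, α, β`, such that
`‖Πu − u_h‖ + ‖Π^W p − p_h‖ ≤ C (‖Π̃u − u‖ + ‖Πu − u‖ + E_c + E_σ)`. -/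
theorem flux_mortar_discrete_error_bound :
    ∀ (Ca Cb α β : ℝ), 0 < Ca → 0 < Cb → 0 < α → 0 < β →
    ∃ C > (0 : ℝ),
      ∀ (X W : Type) [NormedAddCommGroup X] [NormedSpace ℝ X]
        [NormedAddCommGroup W] [NormedSpace ℝ W]
        (Vh : Submodule ℝ X) (Wh : Submodule ℝ W),
        FiniteDimensional ℝ Vh → FiniteDimensional ℝ Wh →
      ∀ (a ah : X →ₗ[ℝ] X →ₗ[ℝ] ℝ) (b : X →ₗ[ℝ] W →ₗ[ℝ] ℝ),
        (∀ x y : X, |a x y| ≤ Ca * ‖x‖ * ‖y‖) →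
        (∀ x y : X, |ah x y| ≤ Ca * ‖x‖ * ‖y‖) →
        (∀ (x : X) (w : W), |b x w| ≤ Cb * ‖x‖ * ‖w‖) →
        (∀ v ∈ Vh, (∀ w ∈ Wh, b v w = 0) → ah v v ≥ α * ‖v‖ ^ 2) →
        (∀ w ∈ Wh, ∃ v ∈ Vh, v ≠ 0 ∧ b v w ≥ β * ‖v‖ * ‖w‖) →
      ∀ (F : W →ₗ[ℝ] ℝ) (u : X) (p : W) (uh : X) (ph : W)
        (Pu Ptu : X) (PWp : W) (Ec Eσ : ℝ),
        (∀ w ∈ Wh, b u w = F w) →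
        uh ∈ Vh → ph ∈ Wh →
        (∀ vh ∈ Vh, ah uh vh - b vh ph = 0) →
        (∀ w ∈ Wh, b uh w = F w) →
        Pu ∈ Vh → (∀ w ∈ Wh, b (u - Pu) w = 0) →
        PWp ∈ Wh → (∀ vh ∈ Vh, b vh (p - PWp) = 0) →
        0 ≤ Ec → 0 ≤ Eσ →
        (∀ vh ∈ Vh, |a u vh - b vh p| ≤ Ec * ‖vh‖) →
        (∀ vh ∈ Vh, |a Ptu vh - ah Ptu vh| ≤ Eσ * ‖vh‖) →
        ‖Pu - uh‖ + ‖PWp - ph‖ ≤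
          C * (‖Ptu - u‖ + ‖Pu - u‖ + Ec + Eσ) := by
  intro Ca Cb α β hCa _ hα hβ
  refine ⟨(1 / α + (1 + Ca / α) / β) * (2 * Ca + 1), by positivity, ?_⟩
  intro X W _ _ _ _ Vh Wh _ _ a ah b hA hAh _ hcoer hinfsup F u p uh ph Pu Ptu PWp Ec Eσ
    hbu huh hph hdisc hbuh hPu hPu_ker hPWp hPWp_ker hEc hEσ hcons hquad
  have hPu_Ptu : ‖Pu - Ptu‖ ≤ ‖Pu - u‖ + ‖Ptu - u‖ := by
    simpa only [norm_sub_rev u Ptu] using norm_sub_le_norm_sub_add_norm_sub Pu u Ptu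
  have hR : Ca * ‖Pu - Ptu‖ + Ca * ‖Ptu - u‖ + Eσ + Ec ≤
      (2 * Ca + 1) * (‖Ptu - u‖ + ‖Pu - u‖ + Ec + Eσ) := by
    nlinarith [norm_nonneg (Ptu - u), norm_nonneg (Pu - u)]
  calc ‖Pu - uh‖ + ‖PWp - ph‖
      ≤ (1 / α + (1 + Ca / α) / β) * (Ca * ‖Pu - Ptu‖ + Ca * ‖Ptu - u‖ + Eσ + Ec) :=
        norm_add_norm_le_of_residual hCa.le hα hβ hAh hcoer hinfsup (Vh.sub_mem hPu huh)
          (Wh.sub_mem hPWp hph) (error_mem_kernel hbu hbuh hPu_ker) (by positivity)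
          fun v hv ↦ abs_error_residual_le hA hAh (hdisc v hv) (hPWp_ker v hv)
            (hcons v hv) (hquad v hv)
    _ ≤ (1 / α + (1 + Ca / α) / β) * ((2 * Ca + 1) * (‖Ptu - u‖ + ‖Pu - u‖ + Ec + Eσ)) := by
        gcongr
    _ = _ := by ring
end

section
/- Theorem 4.5 (abstract a priori error estimate with consistency and quadrature errors for the flux-mortar MFMFE method). Under the hypotheses in the context, there exists a constant C > 0 depending only on Ca, Cb, α, β such that ‖u − u_h‖ + ‖p − p_h‖ ≤ C(‖Π̃u − u‖ + ‖Πu − u‖ + ‖Π^W p − p‖ + E_c + E_σ). -/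
set_option maxHeartbeats 1000000

/-- Theorem 4.5 (abstract a priori error estimate with consistency and quadrature
errors for the flux-mortar MFMFE method): there is a constant `C > 0`, depending only
on the continuity, coercivity and inf-sup constants `Ca, Cb, α, β`, such that
`‖u − u_h‖ + ‖p − p_h‖ ≤ C (‖Π̃u − u‖ + ‖Πu − u‖ + ‖Π^W p − p‖ + E_c + E_σ)`. -/
theorem flux_mortar_abstract_error_estimate :
    ∀ (Ca Cb α β : ℝ), 0 < Ca → 0 < Cb → 0 < α → 0 < β →
    ∃ C > (0 : ℝ),
      ∀ (X W : Type) [NormedAddCommGroup X] [NormedSpace ℝ X]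
        [NormedAddCommGroup W] [NormedSpace ℝ W]
        (Vh : Submodule ℝ X) (Wh : Submodule ℝ W),
        FiniteDimensional ℝ Vh → FiniteDimensional ℝ Wh →
      ∀ (a ah : X →ₗ[ℝ] X →ₗ[ℝ] ℝ) (b : X →ₗ[ℝ] W →ₗ[ℝ] ℝ),
        (∀ x y : X, |a x y| ≤ Ca * ‖x‖ * ‖y‖) →
        (∀ x y : X, |ah x y| ≤ Ca * ‖x‖ * ‖y‖) →
        (∀ (x : X) (w : W), |b x w| ≤ Cb * ‖x‖ * ‖w‖) →
        (∀ v ∈ Vh, (∀ w ∈ Wh, b v w = 0) → ah v v ≥ α * ‖v‖ ^ 2) →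
        (∀ w ∈ Wh, ∃ v ∈ Vh, v ≠ 0 ∧ b v w ≥ β * ‖v‖ * ‖w‖) →
      ∀ (F : W →ₗ[ℝ] ℝ) (u : X) (p : W) (uh : X) (ph : W)
        (Pu Ptu : X) (PWp : W) (Ec Eσ : ℝ),
        (∀ w ∈ Wh, b u w = F w) →
        uh ∈ Vh → ph ∈ Wh →
        (∀ vh ∈ Vh, ah uh vh - b vh ph = 0) →
        (∀ w ∈ Wh, b uh w = F w) →
        Pu ∈ Vh → (∀ w ∈ Wh, b (u - Pu) w = 0) →
        PWp ∈ Wh → (∀ vh ∈ Vh, b vh (p - PWp) = 0) →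
        0 ≤ Ec → 0 ≤ Eσ →
        (∀ vh ∈ Vh, |a u vh - b vh p| ≤ Ec * ‖vh‖) →
        (∀ vh ∈ Vh, |a Ptu vh - ah Ptu vh| ≤ Eσ * ‖vh‖) →
        ‖u - uh‖ + ‖p - ph‖ ≤
          C * (‖Ptu - u‖ + ‖Pu - u‖ + ‖PWp - p‖ + Ec + Eσ) := by
  intro Ca Cb α β hCa hCb hα hβ
  refine ⟨(2*α*β + (2*Ca+1)*β + (2+2*Ca)*α + Ca*(2*Ca+1)) / (α*β), by positivity, ?_⟩
  intro X W _ _ _ _ Vh Wh _ _ a ah b hA hAh hB hcoer hinfsup F u p uh ph Pu Ptu PWp Ec Eσ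
    hu huhV hphW hdisc huh hPuV hPuKer hPWpW hPWpKer hEc hEσ hcons hquad
  have heV : Pu - uh ∈ Vh := Vh.sub_mem hPuV huhV
  have heker : ∀ w ∈ Wh, b (Pu - uh) w = 0 := by
    intro w hw
    have h1 := hPuKer w hw
    have h2 := hu w hw
    have h3 := huh w hw
    simp only [map_sub, LinearMap.sub_apply] at h1 ⊢
    linarith
  have hbep : b (Pu - uh) p = 0 := by
    have h1 := hPWpKer (Pu - uh) heV
    have h0 := heker PWp hPWpW
    simp only [map_sub, LinearMap.sub_apply] at h1 h0 ⊢
    linarith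
  have hahuhe : ah uh (Pu - uh) = 0 := by
    have h1 := hdisc (Pu - uh) heV
    have h2 := heker ph hphW
    linarith
  -- abbreviations
  have hAp : (0:ℝ) ≤ ‖Pu - u‖ := norm_nonneg _
  have hAσ : (0:ℝ) ≤ ‖Ptu - u‖ := norm_nonneg _
  have hAw : (0:ℝ) ≤ ‖PWp - p‖ := norm_nonneg _
  -- velocity estimate
  have hPuPtu : ‖Pu - Ptu‖ ≤ ‖Pu - u‖ + ‖Ptu - u‖ := by
    have h : Pu - Ptu = (Pu - u) - (Ptu - u) := by abel
    rw [h]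
    exact norm_sub_le _ _
  have hM : α * ‖Pu - uh‖ ≤ Ca * ‖Pu - u‖ + 2 * Ca * ‖Ptu - u‖ + Eσ + Ec := by
    have hco := hcoer (Pu - uh) heV heker
    have hsplit : ah (Pu - uh) (Pu - uh) =
        ah (Pu - Ptu) (Pu - uh) + (ah Ptu (Pu - uh) - a Ptu (Pu - uh))
        + a (Ptu - u) (Pu - uh) + (a u (Pu - uh) - b (Pu - uh) p) := by
      have h1 : ah (Pu - uh) (Pu - uh) = ah Pu (Pu - uh) - ah uh (Pu - uh) := by
        simp only [map_sub, LinearMap.sub_apply]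
        ring
      rw [h1, hahuhe, hbep]
      simp only [map_sub, LinearMap.sub_apply]
      ring
    have b1 : ah (Pu - Ptu) (Pu - uh) ≤ Ca * (‖Pu - u‖ + ‖Ptu - u‖) * ‖Pu - uh‖ := by
      have := (le_abs_self _).trans (hAh (Pu - Ptu) (Pu - uh))
      nlinarith [norm_nonneg (Pu - uh), mul_le_mul_of_nonneg_right hPuPtu (norm_nonneg (Pu - uh))]
    have b2 : ah Ptu (Pu - uh) - a Ptu (Pu - uh) ≤ Eσ * ‖Pu - uh‖ := by
      have h := hquad (Pu - uh) heV
      have := abs_le.mp h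
      linarith
    have b3 : a (Ptu - u) (Pu - uh) ≤ Ca * ‖Ptu - u‖ * ‖Pu - uh‖ :=
      (le_abs_self _).trans (hA (Ptu - u) (Pu - uh))
    have b4 : a u (Pu - uh) - b (Pu - uh) p ≤ Ec * ‖Pu - uh‖ :=
      (abs_le.mp (hcons (Pu - uh) heV)).2
    nlinarith [norm_nonneg (Pu - uh), sq_nonneg ‖Pu - uh‖,
      mul_nonneg hCa.le hAp, mul_nonneg hCa.le hAσ, hEc, hEσ]
  -- pressure estimate
  have hqW : PWp - ph ∈ Wh := Wh.sub_mem hPWpW hphW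
  obtain ⟨v, hvV, hvne, hiv⟩ := hinfsup (PWp - ph) hqW
  have hvpos : (0:ℝ) < ‖v‖ := norm_pos_iff.mpr hvne
  have hbq : b v (PWp - ph) = (b v p - a u v) + (a u v - a Ptu v)
      + (a Ptu v - ah Ptu v) + (ah Ptu v - ah uh v) := by
    have h1 : b v (PWp - ph) = b v PWp - b v ph := by simp [map_sub]
    have h2 := hPWpKer v hvV
    have h3 := hdisc v hvV
    simp only [map_sub, LinearMap.sub_apply] at h2 h1 ⊢
    linarith
  have hN : β * ‖PWp - ph‖ ≤ Ec + Eσ + 2 * Ca * ‖Ptu - u‖ + Ca * ‖u - uh‖ := by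
    have c1 : b v p - a u v ≤ Ec * ‖v‖ := by
      have := abs_le.mp (hcons v hvV); linarith
    have c2 : a u v - a Ptu v ≤ Ca * ‖Ptu - u‖ * ‖v‖ := by
      have h : a u v - a Ptu v = a (u - Ptu) v := by
        simp [map_sub, LinearMap.sub_apply]
      rw [h]
      have := (le_abs_self _).trans (hA (u - Ptu) v)
      rwa [norm_sub_rev u Ptu] at this
    have c3 : a Ptu v - ah Ptu v ≤ Eσ * ‖v‖ := by
      have := abs_le.mp (hquad v hvV); linarith
    have c4 : ah Ptu v - ah uh v ≤ Ca * (‖Ptu - u‖ + ‖u - uh‖) * ‖v‖ := by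
      have h : ah Ptu v - ah uh v = ah (Ptu - uh) v := by
        simp [map_sub, LinearMap.sub_apply]
      rw [h]
      have h1 := (le_abs_self _).trans (hAh (Ptu - uh) v)
      have h2 : ‖Ptu - uh‖ ≤ ‖Ptu - u‖ + ‖u - uh‖ := by
        have h3 : Ptu - uh = (Ptu - u) + (u - uh) := by abel
        rw [h3]; exact norm_add_le _ _
      nlinarith [mul_le_mul_of_nonneg_right h2 (norm_nonneg v)]
    have hkey : β * ‖v‖ * ‖PWp - ph‖ ≤
        (Ec + Eσ + 2 * Ca * ‖Ptu - u‖ + Ca * ‖u - uh‖) * ‖v‖ := by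
      calc β * ‖v‖ * ‖PWp - ph‖ ≤ b v (PWp - ph) := hiv
        _ ≤ (Ec + Eσ + 2 * Ca * ‖Ptu - u‖ + Ca * ‖u - uh‖) * ‖v‖ := by
            rw [hbq]; nlinarith
    nlinarith [norm_nonneg (PWp - ph)]
  -- triangles
  have t1 : ‖u - uh‖ ≤ ‖Pu - u‖ + ‖Pu - uh‖ := by
    have h : u - uh = -(Pu - u) + (Pu - uh) := by abel
    rw [h]
    calc ‖-(Pu - u) + (Pu - uh)‖ ≤ ‖-(Pu - u)‖ + ‖Pu - uh‖ := norm_add_le _ _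
      _ = ‖Pu - u‖ + ‖Pu - uh‖ := by rw [norm_neg]
  have t2 : ‖p - ph‖ ≤ ‖PWp - p‖ + ‖PWp - ph‖ := by
    have h : p - ph = -(PWp - p) + (PWp - ph) := by abel
    rw [h]
    calc ‖-(PWp - p) + (PWp - ph)‖ ≤ ‖-(PWp - p)‖ + ‖PWp - ph‖ := norm_add_le _ _
      _ = ‖PWp - p‖ + ‖PWp - ph‖ := by rw [norm_neg]
  -- conclusion
  rw [div_mul_eq_mul_div, le_div_iff₀ (mul_pos hα hβ)]
  have key : α * β * (‖u - uh‖ + ‖p - ph‖) ≤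
      (2*α*β + (2*Ca+1)*β + (2+2*Ca)*α + Ca*(2*Ca+1)) *
        (‖Ptu - u‖ + ‖Pu - u‖ + ‖PWp - p‖ + Ec + Eσ) := by
    have m1 := mul_le_mul_of_nonneg_left t1 (mul_pos hα hβ).le
    have m2 := mul_le_mul_of_nonneg_left t2 (mul_pos hα hβ).le
    have m3 := mul_le_mul_of_nonneg_left hM hβ.le
    have m4 := mul_le_mul_of_nonneg_left hN hα.le
    have m5 := mul_le_mul_of_nonneg_left t1 (mul_pos hCa hα).le
    have m6 := mul_le_mul_of_nonneg_left hM hCa.le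
    linarith [m1, m2, m3, m4, m5, m6,
      mul_nonneg (mul_pos hα hβ).le hAσ,
      mul_nonneg (mul_pos hα hβ).le hAp,
      mul_nonneg (mul_pos hα hβ).le hAw,
      mul_nonneg (mul_pos hα hβ).le hEc,
      mul_nonneg (mul_pos hα hβ).le hEσ,
      mul_nonneg hβ.le hAσ,
      mul_nonneg hβ.le hAp,
      mul_nonneg hβ.le hAw,
      mul_nonneg hβ.le hEc,
      mul_nonneg hβ.le hEσ,
      mul_nonneg hα.le hAσ,
      mul_nonneg hα.le hAp,
      mul_nonneg hα.le hAw,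
      mul_nonneg hα.le hEc,
      mul_nonneg hα.le hEσ,
      mul_nonneg (mul_pos hCa hβ).le hAσ,
      mul_nonneg (mul_pos hCa hβ).le hAp,
      mul_nonneg (mul_pos hCa hβ).le hAw,
      mul_nonneg (mul_pos hCa hβ).le hEc,
      mul_nonneg (mul_pos hCa hβ).le hEσ,
      mul_nonneg (mul_pos hCa hα).le hAσ,
      mul_nonneg (mul_pos hCa hα).le hAp,
      mul_nonneg (mul_pos hCa hα).le hAw,
      mul_nonneg (mul_pos hCa hα).le hEc,
      mul_nonneg (mul_pos hCa hα).le hEσ,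
      mul_nonneg hCa.le hAσ,
      mul_nonneg hCa.le hAp,
      mul_nonneg hCa.le hAw,
      mul_nonneg hCa.le hEc,
      mul_nonneg hCa.le hEσ,
      mul_nonneg (mul_pos hCa hCa).le hAσ,
      mul_nonneg (mul_pos hCa hCa).le hAp,
      mul_nonneg (mul_pos hCa hCa).le hAw,
      mul_nonneg (mul_pos hCa hCa).le hEc,
      mul_nonneg (mul_pos hCa hCa).le hEσ]
  linarith [key]
end

section
/- Theorem 5.3 (abstract a priori error estimate for the flux-mortar MFMFE method on quadrilateral and hexahedral grids, where the test functions are projected by the lowest-order Raviart–Thomas interpolant P = Π^RT). Under the hypotheses in the context, there exists a constant C > 0 depending only on Ca, Cb, α, β, C_P such that ‖u − u_h‖ + ‖p − p_h‖ ≤ C(‖Π̃u − u‖ + ‖Πu − u‖ + ‖Π^W p − p‖ + E_c + E_σ + E_h). -/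
private lemma flux_aux1 (Ca CP Ec Eσ Eh n1 n2 n3 : ℝ) (hCa : 0 < Ca) (hCP : 0 < CP)
    (hEc : 0 ≤ Ec) (hEσ : 0 ≤ Eσ) (hEh : 0 ≤ Eh)
    (h1 : 0 ≤ n1) (h2 : 0 ≤ n2) (h3 : 0 ≤ n3) :
    Ca * (n2 + n1) + Eh + Eσ + Ca * n1 * CP + Ec ≤
      (Ca * (1 + CP) + 1) * (n1 + n2 + n3 + Ec + Eσ + Eh) := by
  nlinarith [mul_nonneg h2 (by positivity : (0:ℝ) ≤ Ca * CP + 1),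
    mul_nonneg h3 (by positivity : (0:ℝ) ≤ Ca * (1 + CP) + 1),
    mul_nonneg (by linarith : (0:ℝ) ≤ Ec + Eσ + Eh)
      (by positivity : (0:ℝ) ≤ Ca + Ca * CP)]

private lemma flux_aux2 (Ca CP Ec Eσ Eh n1 n2 n3 : ℝ) (hCa : 0 < Ca) (hCP : 0 < CP)
    (hEc : 0 ≤ Ec) (hEσ : 0 ≤ Eσ) (hEh : 0 ≤ Eh)
    (h1 : 0 ≤ n1) (h2 : 0 ≤ n2) (h3 : 0 ≤ n3) :
    Ec + Ca * n1 * CP + Eσ + Eh + Ca * n1 ≤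
      (Ca * (1 + CP) + 1) * (n1 + n2 + n3 + Ec + Eσ + Eh) := by
  nlinarith [mul_nonneg h2 (by positivity : (0:ℝ) ≤ Ca * (1 + CP) + 1),
    mul_nonneg h3 (by positivity : (0:ℝ) ≤ Ca * (1 + CP) + 1),
    mul_nonneg (by linarith : (0:ℝ) ≤ Ec + Eσ + Eh)
      (by positivity : (0:ℝ) ≤ Ca + Ca * CP)]

private lemma flux_aux_div (αv MS K n : ℝ) (hα : 0 < αv) (hMS0 : 0 ≤ MS)
    (h0 : 0 ≤ n) (hquad : αv * n ^ 2 ≤ K * n) (hKM : K ≤ MS) : αv * n ≤ MS := by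
  rcases eq_or_lt_of_le h0 with h | h
  · rw [← h]; simpa using hMS0
  · nlinarith

private lemma flux_aux_cancel (βv q K n : ℝ) (hn : 0 < n)
    (h : βv * n * q ≤ K * n) : βv * q ≤ K := by nlinarith

private lemma flux_aux_final (αv βv Ca M S A q uerr perr n2 n3 : ℝ)
    (hα : 0 < αv) (hβ : 0 < βv) (hCa : 0 < Ca)
    (hvel : αv * A ≤ M * S) (hu : uerr ≤ n2 + A) (hn2 : n2 ≤ S)
    (hq : βv * q ≤ M * S + Ca * uerr) (hp : perr ≤ n3 + q) (hn3 : n3 ≤ S) :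
    (uerr + perr) * (αv * βv) ≤
      (2 * (αv * βv) + M * βv + αv * M + Ca * αv + Ca * M) * S := by
  have hu' : αv * uerr ≤ (αv + M) * S := by
    nlinarith [mul_le_mul_of_nonneg_left hu hα.le,
      mul_le_mul_of_nonneg_left hn2 hα.le]
  nlinarith [mul_le_mul_of_nonneg_left hu' hβ.le,
    mul_le_mul_of_nonneg_left hu' hCa.le,
    mul_le_mul_of_nonneg_left hq hα.le,
    mul_le_mul_of_nonneg_left hp (mul_pos hα hβ).le,
    mul_le_mul_of_nonneg_left hn3 (mul_pos hα hβ).le]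

/-- Theorem 5.3 (abstract a priori error estimate for the flux-mortar MFMFE method on
quadrilateral and hexahedral grids, where the test functions are projected by the
lowest-order Raviart–Thomas interpolant `P = Π^RT`): there is a constant `C > 0`,
depending only on `Ca, Cb, α, β, C_P`, such that
`‖u − u_h‖ + ‖p − p_h‖ ≤ C (‖Π̃u − u‖ + ‖Πu − u‖ + ‖Π^W p − p‖ + E_c + E_σ + E_h)`. -/
theorem flux_mortar_abstract_error_estimate_RT :
    ∀ (Ca Cb α β CP : ℝ), 0 < Ca → 0 < Cb → 0 < α → 0 < β → 0 < CP →
    ∃ C > (0 : ℝ),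
      ∀ (X W : Type) [NormedAddCommGroup X] [NormedSpace ℝ X]
        [NormedAddCommGroup W] [NormedSpace ℝ W]
        (Vh : Submodule ℝ X) (Wh : Submodule ℝ W),
        FiniteDimensional ℝ Vh → FiniteDimensional ℝ Wh →
      ∀ (a ah : X →ₗ[ℝ] X →ₗ[ℝ] ℝ) (b : X →ₗ[ℝ] W →ₗ[ℝ] ℝ),
        (∀ x y : X, |a x y| ≤ Ca * ‖x‖ * ‖y‖) →
        (∀ x y : X, |ah x y| ≤ Ca * ‖x‖ * ‖y‖) →
        (∀ (x : X) (w : W), |b x w| ≤ Cb * ‖x‖ * ‖w‖) →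
        (∀ v ∈ Vh, (∀ w ∈ Wh, b v w = 0) → ah v v ≥ α * ‖v‖ ^ 2) →
        (∀ w ∈ Wh, ∃ v ∈ Vh, v ≠ 0 ∧ b v w ≥ β * ‖v‖ * ‖w‖) →
      ∀ (F : W →ₗ[ℝ] ℝ) (u : X) (p : W) (uh : X) (ph : W)
        (Pu Ptu : X) (PWp : W) (P : Vh →ₗ[ℝ] X) (Ec Eσ Eh : ℝ),
        (∀ w ∈ Wh, b u w = F w) →
        uh ∈ Vh → ph ∈ Wh →
        (∀ vh ∈ Vh, ah uh vh - b vh ph = 0) →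
        (∀ w ∈ Wh, b uh w = F w) →
        Pu ∈ Vh → (∀ w ∈ Wh, b (u - Pu) w = 0) →
        PWp ∈ Wh → (∀ vh ∈ Vh, b vh (p - PWp) = 0) →
        (∀ (vh : Vh) (w : W), b (P vh) w = b (vh : X) w) →
        (∀ vh : Vh, ‖P vh‖ ≤ CP * ‖(vh : X)‖) →
        0 ≤ Ec → 0 ≤ Eσ → 0 ≤ Eh →
        (∀ vh : Vh, |a u (P vh) - b (P vh) p| ≤ Ec * ‖(vh : X)‖) →
        (∀ vh : Vh, |a Ptu (P vh) - ah Ptu (P vh)| ≤ Eσ * ‖(vh : X)‖) →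
        (∀ vh : Vh, |ah Ptu ((vh : X) - P vh)| ≤ Eh * ‖(vh : X)‖) →
        ‖u - uh‖ + ‖p - ph‖ ≤
          C * (‖Ptu - u‖ + ‖Pu - u‖ + ‖PWp - p‖ + Ec + Eσ + Eh) := by
  intro Ca Cb α β CP hCa hCb hα hβ hCP
  set M : ℝ := Ca * (1 + CP) + 1 with hMdef
  have hM : 0 < M := by positivity
  refine ⟨(2 * (α * β) + M * β + α * M + Ca * α + Ca * M) / (α * β),
    by positivity, ?_⟩
  intro X W _ _ _ _ Vh Wh _ _ a ah b hab hahb hbb hcoer hinfsup F u p uh ph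
    Pu Ptu PWp P Ec Eσ Eh hbu huh hph hdisc1 hdisc2 hPuV hPub hPWpW hPWpb
    hPdiv hPbd hEc hEσ hEh hEcb hEσb hEhb
  set S : ℝ := ‖Ptu - u‖ + ‖Pu - u‖ + ‖PWp - p‖ + Ec + Eσ + Eh with hSdef
  have hS0 : 0 ≤ S := by positivity
  -- the discrete velocity error
  set eh : Vh := ⟨Pu - uh, sub_mem hPuV huh⟩ with hehdef
  have hehcoe : (eh : X) = Pu - uh := rfl
  -- the error is in the discrete kernel of b
  have hker : ∀ w ∈ Wh, b (Pu - uh) w = 0 := by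
    intro w hw
    have h1 := hPub w hw
    have h2 := hbu w hw
    have h3 := hdisc2 w hw
    simp only [map_sub, LinearMap.sub_apply] at h1 ⊢
    linarith
  -- b (Pu - uh) (p - ph) = 0
  have hbep : b (Pu - uh) (p - ph) = 0 := by
    have h1 := hPWpb (Pu - uh) (sub_mem hPuV huh)
    have h2 := hker (PWp - ph) (sub_mem hPWpW hph)
    simp only [map_sub] at h1 h2 ⊢
    linarith
  -- key identity for the velocity error
  have hPe : b (P eh) p = b (Pu - uh) p := hPdiv eh p
  have hdisc1e := hdisc1 (Pu - uh) (sub_mem hPuV huh)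
  have hident : ah (Pu - uh) (Pu - uh) =
      ah (Pu - Ptu) (Pu - uh) + ah Ptu ((Pu - uh) - P eh) +
      (ah Ptu (P eh) - a Ptu (P eh)) + a (Ptu - u) (P eh) +
      (a u (P eh) - b (P eh) p) := by
    have hbp : b (Pu - uh) p - b (Pu - uh) ph = 0 := by
      have h := hbep; simp only [map_sub] at h ⊢; linarith
    simp only [map_sub, LinearMap.sub_apply] at hdisc1e hbp hPe ⊢
    linarith
  -- bounds on the pieces
  have hcoere : ah (Pu - uh) (Pu - uh) ≥ α * ‖Pu - uh‖ ^ 2 :=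
    hcoer (Pu - uh) (sub_mem hPuV huh) hker
  have hT1 : ah (Pu - Ptu) (Pu - uh) ≤
      Ca * (‖Pu - u‖ + ‖Ptu - u‖) * ‖Pu - uh‖ := by
    have h := (abs_le.mp (hahb (Pu - Ptu) (Pu - uh))).2
    have hn : ‖Pu - Ptu‖ ≤ ‖Pu - u‖ + ‖Ptu - u‖ := by
      calc ‖Pu - Ptu‖ = ‖(Pu - u) - (Ptu - u)‖ := by
            rw [sub_sub_sub_cancel_right]
        _ ≤ ‖Pu - u‖ + ‖Ptu - u‖ := norm_sub_le _ _
    have h2 := mul_le_mul_of_nonneg_right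
      (mul_le_mul_of_nonneg_left hn hCa.le) (norm_nonneg (Pu - uh))
    linarith only [h, h2]
  have hT2 : ah Ptu ((Pu - uh) - P eh) ≤ Eh * ‖Pu - uh‖ := by
    have h := hEhb eh
    rw [hehcoe] at h
    exact (abs_le.mp h).2
  have hT3 : ah Ptu (P eh) - a Ptu (P eh) ≤ Eσ * ‖Pu - uh‖ := by
    have h := hEσb eh
    rw [hehcoe, abs_sub_comm] at h
    exact (abs_le.mp h).2
  have hT4 : a (Ptu - u) (P eh) ≤ Ca * ‖Ptu - u‖ * (CP * ‖Pu - uh‖) := by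
    have h := (abs_le.mp (hab (Ptu - u) (P eh))).2
    have hb' := hPbd eh
    rw [hehcoe] at hb'
    have h2 := mul_le_mul_of_nonneg_left hb'
      (mul_nonneg hCa.le (norm_nonneg (Ptu - u)))
    calc a (Ptu - u) (P eh) ≤ Ca * ‖Ptu - u‖ * ‖P eh‖ := h
      _ ≤ Ca * ‖Ptu - u‖ * (CP * ‖Pu - uh‖) := h2
  have hT5 : a u (P eh) - b (P eh) p ≤ Ec * ‖Pu - uh‖ := by
    have h := hEcb eh
    rw [hehcoe] at h
    exact (abs_le.mp h).2
  -- velocity estimate: α * ‖Pu - uh‖ ≤ M * S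
  have hvel : α * ‖Pu - uh‖ ≤ M * S := by
    have hquad : α * ‖Pu - uh‖ ^ 2 ≤
        (Ca * (‖Pu - u‖ + ‖Ptu - u‖) + Eh + Eσ + Ca * ‖Ptu - u‖ * CP + Ec) *
          ‖Pu - uh‖ := by
      linarith only [hcoere, hident, hT1, hT2, hT3, hT4, hT5]
    have hTS : Ca * (‖Pu - u‖ + ‖Ptu - u‖) + Eh + Eσ + Ca * ‖Ptu - u‖ * CP + Ec
        ≤ M * S := by
      rw [hMdef, hSdef]
      exact flux_aux1 Ca CP Ec Eσ Eh _ _ _ hCa hCP hEc hEσ hEh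
        (norm_nonneg _) (norm_nonneg _) (norm_nonneg _)
    exact flux_aux_div α (M * S) _ ‖Pu - uh‖ hα (mul_nonneg hM.le hS0)
      (norm_nonneg _) hquad hTS
  -- pressure estimate
  obtain ⟨v₀, hv₀V, hv₀ne, hv₀b⟩ := hinfsup (PWp - ph) (sub_mem hPWpW hph)
  set vh₀ : Vh := ⟨v₀, hv₀V⟩ with hvh₀def
  have hvcoe : (vh₀ : X) = v₀ := rfl
  have hv₀pos : 0 < ‖v₀‖ := norm_pos_iff.mpr hv₀ne
  have hbq : b v₀ (PWp - ph) = b v₀ p - b v₀ ph := by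
    have h1 := hPWpb v₀ hv₀V
    simp only [map_sub] at h1 ⊢
    linarith
  have hPv : b (P vh₀) p = b v₀ p := hPdiv vh₀ p
  have hdisc1v := hdisc1 v₀ hv₀V
  have hidq : b v₀ p - b v₀ ph =
      -(a u (P vh₀) - b (P vh₀) p) + a (u - Ptu) (P vh₀) +
      (a Ptu (P vh₀) - ah Ptu (P vh₀)) + ah Ptu (P vh₀ - v₀) +
      ah (Ptu - uh) v₀ := by
    simp only [map_sub, LinearMap.sub_apply] at hPv hdisc1v ⊢
    linarith
  have hq1 : -(a u (P vh₀) - b (P vh₀) p) ≤ Ec * ‖v₀‖ := by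
    have h := hEcb vh₀; rw [hvcoe] at h
    linarith only [(abs_le.mp h).1]
  have hq2 : a (u - Ptu) (P vh₀) ≤ Ca * ‖Ptu - u‖ * (CP * ‖v₀‖) := by
    have h := (abs_le.mp (hab (u - Ptu) (P vh₀))).2
    have hb' := hPbd vh₀
    rw [hvcoe] at hb'
    rw [norm_sub_rev u Ptu] at h
    have h2 := mul_le_mul_of_nonneg_left hb'
      (mul_nonneg hCa.le (norm_nonneg (Ptu - u)))
    calc a (u - Ptu) (P vh₀) ≤ Ca * ‖Ptu - u‖ * ‖P vh₀‖ := h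
      _ ≤ Ca * ‖Ptu - u‖ * (CP * ‖v₀‖) := h2
  have hq3 : a Ptu (P vh₀) - ah Ptu (P vh₀) ≤ Eσ * ‖v₀‖ := by
    have h := hEσb vh₀; rw [hvcoe] at h
    exact (abs_le.mp h).2
  have hq4 : ah Ptu (P vh₀ - v₀) ≤ Eh * ‖v₀‖ := by
    have h := hEhb vh₀; rw [hvcoe] at h
    have heq : ah Ptu (P vh₀ - v₀) = -(ah Ptu (v₀ - P vh₀)) := by
      have h1 := map_sub (ah Ptu) v₀ (P vh₀)
      have h2 := map_sub (ah Ptu) (P vh₀) v₀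
      linarith only [h1, h2]
    rw [heq]
    linarith only [(abs_le.mp h).1]
  have hq5 : ah (Ptu - uh) v₀ ≤ Ca * (‖Ptu - u‖ + ‖u - uh‖) * ‖v₀‖ := by
    have h := (abs_le.mp (hahb (Ptu - uh) v₀)).2
    have hn : ‖Ptu - uh‖ ≤ ‖Ptu - u‖ + ‖u - uh‖ := by
      calc ‖Ptu - uh‖ = ‖(Ptu - u) + (u - uh)‖ := by rw [sub_add_sub_cancel]
        _ ≤ ‖Ptu - u‖ + ‖u - uh‖ := norm_add_le _ _
    have h2 := mul_le_mul_of_nonneg_right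
      (mul_le_mul_of_nonneg_left hn hCa.le) (norm_nonneg v₀)
    linarith only [h, h2]
  have hqbound : β * ‖PWp - ph‖ ≤ M * S + Ca * ‖u - uh‖ := by
    have hb0 : b v₀ p - b v₀ ph ≥ β * ‖v₀‖ * ‖PWp - ph‖ := by
      rw [← hbq]; exact hv₀b
    have hstep : β * ‖v₀‖ * ‖PWp - ph‖ ≤
        (Ec + Ca * ‖Ptu - u‖ * CP + Eσ + Eh + Ca * (‖Ptu - u‖ + ‖u - uh‖)) *
          ‖v₀‖ := by
      linarith only [hb0, hidq, hq1, hq2, hq3, hq4, hq5]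
    have hK := flux_aux_cancel β ‖PWp - ph‖ _ ‖v₀‖ hv₀pos hstep
    have hTS : Ec + Ca * ‖Ptu - u‖ * CP + Eσ + Eh + Ca * ‖Ptu - u‖ ≤ M * S := by
      rw [hMdef, hSdef]
      exact flux_aux2 Ca CP Ec Eσ Eh _ _ _ hCa hCP hEc hEσ hEh
        (norm_nonneg _) (norm_nonneg _) (norm_nonneg _)
    linarith only [hK, hTS]
  -- triangle inequalities
  have hu : ‖u - uh‖ ≤ ‖Pu - u‖ + ‖Pu - uh‖ := by
    calc ‖u - uh‖ = ‖(u - Pu) + (Pu - uh)‖ := by rw [sub_add_sub_cancel]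
      _ ≤ ‖u - Pu‖ + ‖Pu - uh‖ := norm_add_le _ _
      _ = ‖Pu - u‖ + ‖Pu - uh‖ := by rw [norm_sub_rev]
  have hp : ‖p - ph‖ ≤ ‖PWp - p‖ + ‖PWp - ph‖ := by
    calc ‖p - ph‖ = ‖(p - PWp) + (PWp - ph)‖ := by rw [sub_add_sub_cancel]
      _ ≤ ‖p - PWp‖ + ‖PWp - ph‖ := norm_add_le _ _
      _ = ‖PWp - p‖ + ‖PWp - ph‖ := by rw [norm_sub_rev]
  have hPuS : ‖Pu - u‖ ≤ S := by
    rw [hSdef]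
    linarith only [norm_nonneg (Ptu - u), norm_nonneg (PWp - p), hEc, hEσ, hEh]
  have hPWpS : ‖PWp - p‖ ≤ S := by
    rw [hSdef]
    linarith only [norm_nonneg (Ptu - u), norm_nonneg (Pu - u), hEc, hEσ, hEh]
  -- final combination
  rw [div_mul_eq_mul_div, le_div_iff₀ (by positivity : (0:ℝ) < α * β)]
  exact flux_aux_final α β Ca M S ‖Pu - uh‖ ‖PWp - ph‖ ‖u - uh‖ ‖p - ph‖
    ‖Pu - u‖ ‖PWp - p‖ hα hβ hCa hvel hu hPuS hqbound hp hPWpS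
end

section
/- Theorem 4.3 (unique solvability of the mortar variable). Under the hypotheses in the context: (i) the sum V_h = V_h^0 + R(Λ_h) is direct, i.e. if u⁰ + Rλ = 0 with u⁰ ∈ V_h^0 and λ ∈ Λ_h then u⁰ = 0 and λ = 0; and (ii) the flux-mortar problem — find (u⁰, λ, p) ∈ V_h^0 × Λ_h × W_h with a^h(u⁰ + Rλ, v⁰) − b(v⁰, p) = 0 for all v⁰ ∈ V_h^0, a^h(u⁰ + Rλ, Rμ) − b(Rμ, p) = 0 for all μ ∈ Λ_h, and b(u⁰ + Rλ, w) = F(w) for all w ∈ W_h — has a unique solution. -/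
open Module

set_option maxHeartbeats 1000000

/-- Theorem 4.3 (unique solvability of the mortar variable). Under the mortar condition
(encoded by the trace map `T`, the projection `Q` with `T ∘ R = Q`, and the bound
`‖μ‖ ≤ C_Q ‖Qμ‖`) and the Brezzi conditions on `a^h` and `b`: (i) the sum
`V_h = V_h^0 + R(Λ_h)` is direct, and (ii) the flux-mortar problem has a unique
solution `(u⁰, λ, p) ∈ V_h^0 × Λ_h × W_h`. -/
theorem flux_mortar_unique_mortar_solvability
    (X Λh Wh Y : Type*)
    [NormedAddCommGroup X] [NormedSpace ℝ X]
    [NormedAddCommGroup Λh] [NormedSpace ℝ Λh] [FiniteDimensional ℝ Λh]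
    [NormedAddCommGroup Wh] [NormedSpace ℝ Wh] [FiniteDimensional ℝ Wh]
    [NormedAddCommGroup Y] [NormedSpace ℝ Y]
    (Vh0 : Submodule ℝ X) [FiniteDimensional ℝ Vh0]
    (R : Λh →ₗ[ℝ] X)
    (T : X →ₗ[ℝ] Y) (hT : ∀ v ∈ Vh0, T v = 0)
    (Q : Λh →ₗ[ℝ] Y) (hTR : ∀ μ : Λh, T (R μ) = Q μ)
    (CQ : ℝ) (hCQ : 0 < CQ) (hQ : ∀ μ : Λh, ‖μ‖ ≤ CQ * ‖Q μ‖)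
    (ah : X →ₗ[ℝ] X →ₗ[ℝ] ℝ) (b : X →ₗ[ℝ] Wh →ₗ[ℝ] ℝ)
    (Ca Cb α β : ℝ) (hCa : 0 < Ca) (hCb : 0 < Cb) (hα : 0 < α) (hβ : 0 < β)
    (hah_cont : ∀ x y : X, |ah x y| ≤ Ca * ‖x‖ * ‖y‖)
    (hb_cont : ∀ (x : X) (w : Wh), |b x w| ≤ Cb * ‖x‖ * ‖w‖)
    (hcoer : ∀ v ∈ Vh0 ⊔ LinearMap.range R,
      (∀ w : Wh, b v w = 0) → ah v v ≥ α * ‖v‖ ^ 2)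
    (hinfsup : ∀ w : Wh, ∃ v ∈ Vh0 ⊔ LinearMap.range R,
      v ≠ 0 ∧ b v w ≥ β * ‖v‖ * ‖w‖)
    (F : Wh →ₗ[ℝ] ℝ) :
    (∀ u0 ∈ Vh0, ∀ lam : Λh, u0 + R lam = 0 → u0 = 0 ∧ lam = 0) ∧
    (∃! s : Vh0 × Λh × Wh,
      (∀ v0 ∈ Vh0, ah ((s.1 : X) + R s.2.1) v0 - b v0 s.2.2 = 0) ∧
      (∀ μ : Λh, ah ((s.1 : X) + R s.2.1) (R μ) - b (R μ) s.2.2 = 0) ∧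
      (∀ w : Wh, b ((s.1 : X) + R s.2.1) w = F w)) := by
  -- Part (i): directness of the sum
  have direct : ∀ u0 ∈ Vh0, ∀ lam : Λh, u0 + R lam = 0 → u0 = 0 ∧ lam = 0 := by
    intro u0 hu0 lam h
    have hQ0 : Q lam = 0 := by
      have h' := congrArg T h
      rw [map_add, hTR, hT u0 hu0, zero_add, map_zero] at h'
      exact h'
    have hlam : lam = 0 := by
      have hle := hQ lam
      rw [hQ0, norm_zero, mul_zero] at hle
      exact norm_le_zero_iff.mp hle
    subst hlam
    rw [map_zero, add_zero] at h
    exact ⟨h, rfl⟩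
  refine ⟨direct, ?_⟩
  -- the combined "velocity" map and pressure projection
  set E : (Vh0 × Λh × Wh) →ₗ[ℝ] X :=
    Vh0.subtype.comp (LinearMap.fst ℝ Vh0 (Λh × Wh)) +
      R.comp ((LinearMap.fst ℝ Λh Wh).comp (LinearMap.snd ℝ Vh0 (Λh × Wh))) with hE
  set P : (Vh0 × Λh × Wh) →ₗ[ℝ] Wh :=
    (LinearMap.snd ℝ Λh Wh).comp (LinearMap.snd ℝ Vh0 (Λh × Wh)) with hP
  have hEs : ∀ s : Vh0 × Λh × Wh, E s = (s.1 : X) + R s.2.1 := by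
    intro s; simp [hE]
  have hPs : ∀ s : Vh0 × Λh × Wh, P s = s.2.2 := by
    intro s; simp [hP]
  -- the system as one linear map into the dual spaces
  set L : (Vh0 × Λh × Wh) →ₗ[ℝ] (Dual ℝ Vh0 × Dual ℝ Λh × Dual ℝ Wh) :=
    ((Vh0.subtype.dualMap.comp ah).comp E -
        (Vh0.subtype.dualMap.comp b.flip).comp P).prod
      ((((R.dualMap.comp ah).comp E) - ((R.dualMap.comp b.flip).comp P)).prod
        (b.comp E)) with hL
  have hL1 : ∀ (s : Vh0 × Λh × Wh) (v : Vh0),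
      (L s).1 v = ah ((s.1 : X) + R s.2.1) (v : X) - b (v : X) s.2.2 := by
    intro s v
    simp [hL, hEs, hPs]
  have hL2 : ∀ (s : Vh0 × Λh × Wh) (μ : Λh),
      (L s).2.1 μ = ah ((s.1 : X) + R s.2.1) (R μ) - b (R μ) s.2.2 := by
    intro s μ
    simp [hL, hEs, hPs]
  have hL3 : ∀ (s : Vh0 × Λh × Wh) (w : Wh),
      (L s).2.2 w = b ((s.1 : X) + R s.2.1) w := by
    intro s w
    simp [hL, hEs]
  -- injectivity of L
  have hinj : Function.Injective L := by
    rw [← LinearMap.ker_eq_bot]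
    rw [Submodule.eq_bot_iff]
    intro s hs
    rw [LinearMap.mem_ker] at hs
    have h1 : ∀ v : Vh0, ah ((s.1 : X) + R s.2.1) (v : X) - b (v : X) s.2.2 = 0 := by
      intro v; rw [← hL1 s v, hs]; rfl
    have h2 : ∀ μ : Λh, ah ((s.1 : X) + R s.2.1) (R μ) - b (R μ) s.2.2 = 0 := by
      intro μ; rw [← hL2 s μ, hs]; rfl
    have h3 : ∀ w : Wh, b ((s.1 : X) + R s.2.1) w = 0 := by
      intro w; rw [← hL3 s w, hs]; rfl
    set u : X := (s.1 : X) + R s.2.1 with hu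
    have hu_mem : u ∈ Vh0 ⊔ LinearMap.range R :=
      Submodule.add_mem_sup s.1.2 ⟨s.2.1, rfl⟩
    -- a^h(u,u) = b(u,p) = 0
    have hbup : b u s.2.2 = 0 := h3 s.2.2
    have hbsplit : b u s.2.2 = b (s.1 : X) s.2.2 + b (R s.2.1) s.2.2 := by
      rw [hu, map_add, LinearMap.add_apply]
    have hasplit : ah u u = ah u (s.1 : X) + ah u (R s.2.1) := by
      conv_lhs => rw [hu]
      rw [map_add]
    have e1 := h1 s.1
    have e2 := h2 s.2.1
    have hahuu : ah u u = 0 := by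
      rw [hasplit]
      have : ah u (s.1 : X) = b (s.1 : X) s.2.2 := by linarith [e1]
      have h2' : ah u (R s.2.1) = b (R s.2.1) s.2.2 := by linarith [e2]
      rw [this, h2', ← hbsplit, hbup]
    have hcoeru := hcoer u hu_mem h3
    have hsq : ‖u‖ ^ 2 ≤ 0 := by
      have h' : α * ‖u‖ ^ 2 ≤ α * 0 := by rw [mul_zero]; linarith [hcoeru, hahuu]
      exact le_of_mul_le_mul_left h' hα
    have hnu : ‖u‖ = 0 := pow_eq_zero_iff two_ne_zero |>.mp (le_antisymm hsq (sq_nonneg _))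
    have hu0 : u = 0 := norm_eq_zero.mp hnu
    have hdz := direct (s.1 : X) s.1.2 s.2.1 hu0
    have hs1 : s.1 = 0 := Subtype.ext hdz.1
    have hs21 : s.2.1 = 0 := hdz.2
    -- now b(v, p) = 0 for all v in the sum, hence p = 0 by inf-sup
    have hbvp : ∀ v ∈ Vh0 ⊔ LinearMap.range R, b v s.2.2 = 0 := by
      intro v hv
      rcases Submodule.mem_sup.mp hv with ⟨y, hy, z, hz, rfl⟩
      rcases hz with ⟨μ, rfl⟩
      have ey := h1 ⟨y, hy⟩
      have eμ := h2 μ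
      rw [hu0] at ey eμ
      simp only [map_zero, LinearMap.zero_apply, zero_sub, neg_eq_zero] at ey eμ
      rw [map_add, LinearMap.add_apply]
      simpa using by rw [ey, eμ]; ring
    have hp : s.2.2 = 0 := by
      by_contra hne
      obtain ⟨v, hv, hvne, hbv⟩ := hinfsup s.2.2
      rw [hbvp v hv] at hbv
      have h1' : 0 < ‖v‖ := norm_pos_iff.mpr hvne
      have h2' : 0 < ‖s.2.2‖ := norm_pos_iff.mpr hne
      have := mul_pos (mul_pos hβ h1') h2'
      linarith
    exact Prod.ext hs1 (Prod.ext hs21 hp)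
  -- surjectivity of L by dimension count
  have hsurj : Function.Surjective L := by
    rw [← LinearMap.range_eq_top]
    apply Submodule.eq_top_of_finrank_eq
    rw [LinearMap.finrank_range_of_inj hinj]
    simp [Module.finrank_prod, Subspace.dual_finrank_eq]
  obtain ⟨s, hsL⟩ := hsurj (0, 0, F)
  -- translate L s = (0,0,F) to the three variational equations
  have key : ∀ t : Vh0 × Λh × Wh,
      ((∀ v0 ∈ Vh0, ah ((t.1 : X) + R t.2.1) v0 - b v0 t.2.2 = 0) ∧
       (∀ μ : Λh, ah ((t.1 : X) + R t.2.1) (R μ) - b (R μ) t.2.2 = 0) ∧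
       (∀ w : Wh, b ((t.1 : X) + R t.2.1) w = F w)) ↔ L t = (0, 0, F) := by
    intro t
    constructor
    · rintro ⟨c1, c2, c3⟩
      have e1 : (L t).1 = 0 := by
        ext v; rw [hL1]; exact c1 (v : X) v.2
      have e2 : (L t).2.1 = 0 := by
        ext μ; rw [hL2]; exact c2 μ
      have e3 : (L t).2.2 = F := by
        ext w; rw [hL3]; exact c3 w
      exact Prod.ext e1 (Prod.ext e2 e3)
    · intro h
      refine ⟨?_, ?_, ?_⟩
      · intro v0 hv0
        have := hL1 t ⟨v0, hv0⟩
        rw [h] at this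
        simpa using this.symm
      · intro μ
        have := hL2 t μ
        rw [h] at this
        simpa using this.symm
      · intro w
        have := hL3 t w
        rw [h] at this
        simpa using this.symm
  refine ⟨s, (key s).mpr hsL, ?_⟩
  intro t ht
  exact hinj (((key t).mp ht).trans hsL.symm)
end

section
/- Vanishing of the Lagrange multiplier in step 2 of the non-overlapping domain decomposition algorithm (Section 6.1). Suppose λ̄_f ∈ Λ_h satisfies b(R̃λ̄_f, s) = F(s) for all s ∈ S (the coarse problem (6.2)), and suppose (u_f⁰, p_f⁰, r_f) ∈ V_h^0 × W_h × S satisfies b(u_f⁰, w) − ⟨r_f, w⟩ = −b(R̃λ̄_f, w) + F(w) for all w ∈ W_h (the mass-balance equation of the local subdomain problems (6.3)). Then r_f = 0. -/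
open RealInnerProductSpace

/-- Vanishing of the Lagrange multiplier in step 2 of the non-overlapping domain
decomposition algorithm (Section 6.1): if `λ̄_f` solves the coarse problem (6.2) and
`(u_f⁰, p_f⁰, r_f)` satisfies the mass-balance equation of the local subdomain
problems (6.3), then `r_f = 0`. -/
theorem dd_step2_multiplier_vanishes
    (X Λh Wh : Type*) [AddCommGroup X] [Module ℝ X]
    [AddCommGroup Λh] [Module ℝ Λh]
    [NormedAddCommGroup Wh] [InnerProductSpace ℝ Wh]
    (S : Submodule ℝ Wh) (Vh0 : Submodule ℝ X)
    (Rt : Λh →ₗ[ℝ] X)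
    (b : X →ₗ[ℝ] Wh →ₗ[ℝ] ℝ)
    (hbS : ∀ v0 ∈ Vh0, ∀ s ∈ S, b v0 s = 0)
    (F : Wh →ₗ[ℝ] ℝ)
    (lamf : Λh) (hlamf : ∀ s ∈ S, b (Rt lamf) s = F s)
    (uf0 : X) (pf0 : Wh) (rf : Wh)
    (huf0 : uf0 ∈ Vh0) (hrf : rf ∈ S)
    (hmass : ∀ w : Wh, b uf0 w - ⟪rf, w⟫ = -(b (Rt lamf) w) + F w) :
    rf = 0 := by
  have h := hmass rf
  rw [hbS uf0 huf0 rf hrf, hlamf rf hrf] at h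
  have : ⟪rf, rf⟫ = (0 : ℝ) := by linarith
  exact inner_self_eq_zero.mp this
end
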